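/- arXiv:2602.05803 — 4 statements merged into one kernel-verified Lean document; each statement's English description precedes it below -/
import Mathlib

section
/- Let G be a connected simple undirected graph on vertex set {1,…,N} with N ≥ 2, let L be its Laplacian matrix, and let λ₂ = inf{ (vᵀLv)/(vᵀv) : v ∈ ℝ^N, v ≠ 0, 1ᵀv = 0 } be its second-smallest eigenvalue. Let β > 0, let x : [0,∞) → ℝ^N be differentiable with γ := sup_{τ ≥ 0} ‖(I − (1/N)·1·1ᵀ)·x'(τ)‖₂ < ∞, and let x̂ : [0,∞) → ℝ^N be differentiable with x̂'(t) = x'(t) − β·L·x̂(t) for all t ≥ 0 and x̂(0) = x(0). Then for every agent i, limsup_{t→∞} |x̂_i(t) − (1/N)·Σ_{j=1}^N x_j(t)| ≤ γ/(β·λ₂). -/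
/-!
Because `𝟙ᵀ L = 0` and `x̂(0) = x(0)`, the estimates keep `∑ x̂ = ∑ x`, so the error
`x̂ᵢ - avg x` is the `i`-th entry of `e = P x̂` with `P = I - 𝟙𝟙ᵀ/N`. Using `L 𝟙 = 0`,
`e' = P x' - β L e` with `𝟙ᵀ e = 0`, so for `V = eᵀe` Cauchy–Schwarz and `eᵀ L e ≥ λ₂ eᵀe` give
`V' ≤ 2γ√V - 2βλ₂ V`, whence `√V(t) ≤ C e^{-βλ₂ t} + γ / (βλ₂)`.
As for `λ₂ > 0`: the Rayleigh quotient is scale invariant, so its infimum over `𝟙^⊥` is attained on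
the compact unit sphere, where the Laplacian form is positive because it vanishes only on
vectors constant on the connected components.
-/

open Matrix Filter
open scoped Topology

section DotProduct

variable {ι : Type*} [Fintype ι]

def sumZeroSubmodule (ι : Type*) [Fintype ι] : Submodule ℝ (ι → ℝ) where
  carrier := {v | ∑ i, v i = 0}
  add_mem' hv hw := by simp_all [Finset.sum_add_distrib]
  zero_mem' := by simp
  smul_mem' c v hv := by simp_all [← Finset.mul_sum]

theorem sumZeroSubmodule_ne_bot [Nontrivial ι] : sumZeroSubmodule ι ≠ ⊥ := by
  classical
  obtain ⟨i, j, hij⟩ := exists_pair_ne ι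
  refine (Submodule.ne_bot_iff _).2 ⟨Pi.single i 1 - Pi.single j 1, ?_, fun h => ?_⟩
  · simp [sumZeroSubmodule]
  · simpa [hij] using congr_fun h i

theorem dotProduct_self_nonneg (v : ι → ℝ) : 0 ≤ v ⬝ᵥ v :=
  Finset.sum_nonneg fun i _ => mul_self_nonneg (v i)

theorem dotProduct_self_pos {v : ι → ℝ} (hv : v ≠ 0) : 0 < v ⬝ᵥ v := by
  simpa using dotProduct_self_star_pos_iff.2 hv

theorem dotProduct_le_sqrt_mul_sqrt (u v : ι → ℝ) : u ⬝ᵥ v ≤ √(u ⬝ᵥ u) * √(v ⬝ᵥ v) := by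
  simpa [dotProduct, sq] using Real.sum_mul_le_sqrt_mul_sqrt Finset.univ u v

theorem abs_apply_le_sqrt_dotProduct_self (v : ι → ℝ) (i : ι) : |v i| ≤ √(v ⬝ᵥ v) :=
  Real.abs_le_sqrt <| by
    simpa [sq, dotProduct] using
      Finset.single_le_sum (fun j _ => mul_self_nonneg (v j)) (Finset.mem_univ i)

end DotProduct

namespace Matrix

variable {ι : Type*} [Fintype ι]

noncomputable def rayleighQuotient (A : Matrix ι ι ℝ) (v : ι → ℝ) : ℝ := (v ⬝ᵥ (A *ᵥ v)) / (v ⬝ᵥ v)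

def rayleighQuotients (A : Matrix ι ι ℝ) (W : Submodule ℝ (ι → ℝ)) : Set ℝ :=
  {r | ∃ v : ι → ℝ, v ≠ 0 ∧ v ∈ W ∧ r = rayleighQuotient A v}

theorem rayleighQuotient_smul (A : Matrix ι ι ℝ) {c : ℝ} (hc : c ≠ 0) (v : ι → ℝ) :
    rayleighQuotient A (c • v) = rayleighQuotient A v := by
  simp only [rayleighQuotient, mulVec_smul, smul_dotProduct, dotProduct_smul, smul_eq_mul]
  rw [← mul_assoc, ← mul_assoc, mul_div_mul_left _ _ (mul_ne_zero hc hc)]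

theorem exists_pos_le_rayleighQuotient (A : Matrix ι ι ℝ) (W : Submodule ℝ (ι → ℝ))
    (hA : ∀ v ∈ W, v ≠ 0 → 0 < v ⬝ᵥ (A *ᵥ v)) :
    ∃ m > 0, ∀ v ∈ W, v ≠ 0 → m ≤ rayleighQuotient A v := by
  set K := Metric.sphere (0 : ι → ℝ) 1 ∩ W
  have hK : IsCompact K := (isCompact_sphere 0 1).inter_right W.closed_of_finiteDimensional
  have normalize : ∀ v ∈ W, v ≠ 0 → ‖v‖⁻¹ • v ∈ K := fun v hv hv0 =>
    ⟨by simp [norm_smul, hv0], W.smul_mem _ hv⟩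
  rcases K.eq_empty_or_nonempty with hK0 | hKne
  · refine ⟨1, one_pos, fun v hv hv0 => ?_⟩
    simpa [hK0] using normalize v hv hv0
  have hcont : ContinuousOn (rayleighQuotient A) K := by
    refine ContinuousOn.div (by fun_prop) (by fun_prop) fun v hv => ?_
    rw [Ne, dotProduct_self_eq_zero]
    rintro rfl
    simpa using hv.1
  obtain ⟨v₀, hv₀, hmin⟩ := hK.exists_isMinOn hKne hcont
  have hv₀0 : v₀ ≠ 0 := by rintro rfl; simpa using hv₀.1
  refine ⟨_, div_pos (hA v₀ hv₀.2 hv₀0) (dotProduct_self_pos hv₀0), fun v hv hv0 => ?_⟩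
  rw [← rayleighQuotient_smul A (inv_ne_zero (norm_ne_zero_iff.2 hv0)) v]
  exact hmin (normalize v hv hv0)

theorem sInf_rayleighQuotients_pos {A : Matrix ι ι ℝ} {W : Submodule ℝ (ι → ℝ)}
    (hA : ∀ v ∈ W, v ≠ 0 → 0 < v ⬝ᵥ (A *ᵥ v)) (hW : W ≠ ⊥) :
    0 < sInf (rayleighQuotients A W) := by
  obtain ⟨m, hm, hle⟩ := exists_pos_le_rayleighQuotient A W hA
  obtain ⟨v, hv, hv0⟩ := (Submodule.ne_bot_iff W).1 hW
  refine hm.trans_le (le_csInf ⟨_, v, hv0, hv, rfl⟩ ?_)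
  rintro _ ⟨u, hu0, hu, rfl⟩
  exact hle u hu hu0

theorem sInf_rayleighQuotients_mul_le {A : Matrix ι ι ℝ} {W : Submodule ℝ (ι → ℝ)}
    (hA : ∀ v ∈ W, 0 ≤ v ⬝ᵥ (A *ᵥ v)) {v : ι → ℝ} (hv : v ∈ W) :
    sInf (rayleighQuotients A W) * (v ⬝ᵥ v) ≤ v ⬝ᵥ (A *ᵥ v) := by
  rcases eq_or_ne v 0 with rfl | hv0
  · simp
  rw [← le_div_iff₀ (dotProduct_self_pos hv0)]
  refine csInf_le ⟨0, ?_⟩ ⟨v, hv0, hv, rfl⟩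
  rintro _ ⟨u, -, hu, rfl⟩
  exact div_nonneg (hA u hu) (dotProduct_self_nonneg u)

end Matrix

namespace SimpleGraph

variable {V : Type*} [Fintype V] [DecidableEq V] (G : SimpleGraph V) [DecidableRel G.Adj]

theorem sum_lapMatrix_mulVec (u : V → ℝ) : ∑ i, (G.lapMatrix ℝ *ᵥ u) i = 0 := by
  rw [← one_dotProduct, dotProduct_mulVec, ← mulVec_transpose, (isSymm_lapMatrix ℝ G).eq,
    Pi.one_def, lapMatrix_mulVec_const_eq_zero, zero_dotProduct]

theorem dotProduct_lapMatrix_mulVec_nonneg (v : V → ℝ) : 0 ≤ v ⬝ᵥ (G.lapMatrix ℝ *ᵥ v) := by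
  simpa using (posSemidef_lapMatrix ℝ G).dotProduct_mulVec_nonneg v

variable {G}

theorem Connected.dotProduct_lapMatrix_mulVec_pos (hG : G.Connected) {v : V → ℝ}
    (hv : v ≠ 0) (hsum : ∑ i, v i = 0) : 0 < v ⬝ᵥ (G.lapMatrix ℝ *ᵥ v) := by
  have hpsd := posSemidef_lapMatrix ℝ G
  refine (G.dotProduct_lapMatrix_mulVec_nonneg v).lt_of_ne' fun h0 => hv ?_
  have hconst : ∀ i j, v i = v j := fun i j =>
    (lapMatrix_mulVec_eq_zero_iff_forall_reachable G).1
      ((hpsd.dotProduct_mulVec_zero_iff v).1 h0) i j (hG i j)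
  obtain ⟨i₀⟩ := hG.nonempty
  have hcard : (Fintype.card V : ℝ) * v i₀ = 0 := by simpa [hconst _ i₀] using hsum
  funext i
  rw [hconst i i₀, Pi.zero_apply]
  exact (mul_eq_zero.1 hcard).resolve_left (Nat.cast_ne_zero.2 (Fintype.card_pos_iff.2 ⟨i₀⟩).ne')

end SimpleGraph

section Centering

variable {ι : Type*} [Fintype ι] [DecidableEq ι]

noncomputable def centeringMatrix (ι : Type*) [Fintype ι] [DecidableEq ι] : Matrix ι ι ℝ :=
  1 - (Fintype.card ι : ℝ)⁻¹ • of fun _ _ => 1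

theorem centeringMatrix_mulVec_apply (v : ι → ℝ) (i : ι) :
    (centeringMatrix ι *ᵥ v) i = v i - (∑ j, v j) / Fintype.card ι := by
  simp only [centeringMatrix, sub_mulVec, one_mulVec, smul_mulVec, Pi.sub_apply, Pi.smul_apply,
    smul_eq_mul]
  simp [mulVec, dotProduct, div_eq_inv_mul]

theorem sum_centeringMatrix_mulVec (v : ι → ℝ) : ∑ i, (centeringMatrix ι *ᵥ v) i = 0 := by
  rcases isEmpty_or_nonempty ι with hι | hι
  · simp
  · simp [centeringMatrix_mulVec_apply, Finset.sum_sub_distrib, mul_div_cancel₀]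

theorem mulVec_centeringMatrix_mulVec {L : Matrix ι ι ℝ} (hL : L *ᵥ 1 = 0) (v : ι → ℝ) :
    L *ᵥ (centeringMatrix ι *ᵥ v) = L *ᵥ v := by
  have : centeringMatrix ι *ᵥ v = v - ((∑ j, v j) / Fintype.card ι) • 1 := by
    ext i; simp [centeringMatrix_mulVec_apply]
  rw [this, mulVec_sub, mulVec_smul, hL, smul_zero, sub_zero]

theorem centeringMatrix_mulVec_of_sum_eq_zero {v : ι → ℝ} (hv : ∑ i, v i = 0) :
    centeringMatrix ι *ᵥ v = v := by
  ext i; simp [centeringMatrix_mulVec_apply, hv]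

end Centering

theorem HasDerivAt.dotProduct {ι : Type*} [Fintype ι] {f g : ℝ → ι → ℝ} {f' g' : ι → ℝ} {t : ℝ}
    (hf : HasDerivAt f f' t) (hg : HasDerivAt g g' t) :
    HasDerivAt (fun s => f s ⬝ᵥ g s) (f' ⬝ᵥ g t + f t ⬝ᵥ g') t := by
  simp only [_root_.dotProduct, ← Finset.sum_add_distrib]
  exact HasDerivAt.fun_sum fun i _ => (hasDerivAt_pi.1 hf i).mul (hasDerivAt_pi.1 hg i)

theorem HasDerivAt.matrix_mulVec {m n : Type*} [Fintype n] (A : Matrix m n ℝ) {f : ℝ → n → ℝ}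
    {f' : n → ℝ} {t : ℝ} (hf : HasDerivAt f f' t) :
    HasDerivAt (fun s => A *ᵥ f s) (A *ᵥ f') t := by
  refine hasDerivAt_pi.2 fun i => ?_
  simp only [mulVec, _root_.dotProduct]
  exact HasDerivAt.fun_sum fun j _ => (hasDerivAt_pi.1 hf j).const_mul _

section ScalarDecay

open Real

-- The `+ 1` keeps the square root differentiable where `W` vanishes.
theorem sqrt_add_one_le_of_deriv_le {W W' B B' : ℝ → ℝ} (hW : ∀ t ≥ 0, 0 ≤ W t)
    (hW' : ∀ t ≥ 0, HasDerivAt W (W' t) t) (hB : ∀ t ≥ 0, HasDerivAt B (B' t) t)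
    (hB' : ∀ t ≥ 0, 0 ≤ B' t) (hWB : ∀ t ≥ 0, W' t ≤ 2 * B' t * √(W t)) :
    ∀ t ≥ 0, √(W t + 1) ≤ √(W 0 + 1) + (B t - B 0) := by
  have hφ : ∀ t ≥ 0, HasDerivAt (fun s => √(W s + 1)) (W' t / (2 * √(W t + 1))) t :=
    fun t ht => ((hW' t ht).add_const 1).sqrt (by linarith [hW t ht])
  have hbarrier : ∀ t ≥ 0, HasDerivAt (fun s => √(W 0 + 1) + (B s - B 0)) (B' t) t :=
    fun t ht => ((hB t ht).sub_const _).const_add _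
  intro t ht
  refine image_le_of_deriv_right_le_deriv_boundary (a := 0) (b := t)
    (fun s hs => (hφ s hs.1).continuousAt.continuousWithinAt)
    (fun s hs => (hφ s hs.1).hasDerivWithinAt) (by simp)
    (fun s hs => (hbarrier s hs.1).continuousAt.continuousWithinAt)
    (fun s hs => (hbarrier s hs.1).hasDerivWithinAt)
    (fun s hs => ?_) ⟨ht, le_rfl⟩
  have hpos : 0 < √(W s + 1) := sqrt_pos.2 (by linarith [hW s hs.1])
  have hle : √(W s) ≤ √(W s + 1) := sqrt_le_sqrt (by linarith)
  rw [div_le_iff₀ (mul_pos two_pos hpos)]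
  linarith [hWB s hs.1, mul_le_mul_of_nonneg_left hle (hB' s hs.1)]

theorem sqrt_le_of_deriv_le_sqrt_sub {V V' : ℝ → ℝ} {a γ : ℝ} (ha : 0 < a) (hγ : 0 ≤ γ)
    (hV : ∀ t ≥ 0, 0 ≤ V t) (hV' : ∀ t ≥ 0, HasDerivAt V (V' t) t)
    (hbound : ∀ t ≥ 0, V' t ≤ 2 * γ * √(V t) - 2 * a * V t) :
    ∀ t ≥ 0, √(V t) ≤ √(V 0 + 1) * exp (-(a * t)) + γ / a := by
  have hexp : ∀ c t : ℝ, HasDerivAt (fun s => exp (c * s)) (c * exp (c * t)) t := fun c t => by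
    simpa [mul_comm] using ((hasDerivAt_id t).const_mul c).exp
  have hsqrtW : ∀ t, √(exp (2 * a * t) * V t) = exp (a * t) * √(V t) := fun t => by
    rw [sqrt_mul (exp_pos _).le, show 2 * a * t = a * t + a * t by ring, exp_add,
      sqrt_mul_self (exp_pos _).le]
  -- `W = e^{2at} V` satisfies `W' ≤ 2 (γ e^{at}) √W`.
  have key := sqrt_add_one_le_of_deriv_le (W := fun t => exp (2 * a * t) * V t)
    (B := fun t => γ / a * exp (a * t))
    (fun t ht => mul_nonneg (exp_pos _).le (hV t ht))
    (fun t ht => (hexp (2 * a) t).mul (hV' t ht))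
    (fun t _ => (hexp a t).const_mul (γ / a))
    (fun t _ => by positivity)
    (fun t ht => by
      rw [hsqrtW, show 2 * a * t = a * t + a * t by ring, exp_add]
      calc 2 * a * (exp (a * t) * exp (a * t)) * V t + exp (a * t) * exp (a * t) * V' t
          = exp (a * t) * exp (a * t) * (V' t + 2 * a * V t) := by ring
        _ ≤ exp (a * t) * exp (a * t) * (2 * γ * √(V t)) := by
          gcongr; linarith [hbound t ht]
        _ = 2 * (γ / a * (a * exp (a * t))) * (exp (a * t) * √(V t)) := by
          field_simp)
  intro t ht
  have hWt := key t ht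
  simp only [mul_zero, exp_zero, one_mul, mul_one] at hWt
  have hle : exp (a * t) * √(V t) ≤ √(V 0 + 1) + γ / a * (exp (a * t) - 1) := by
    rw [← hsqrtW]
    linarith [sqrt_le_sqrt (le_add_of_nonneg_right zero_le_one :
      exp (2 * a * t) * V t ≤ exp (2 * a * t) * V t + 1)]
  have hinv : exp (-(a * t)) * exp (a * t) = 1 := by rw [← exp_add]; simp
  calc √(V t) = exp (-(a * t)) * (exp (a * t) * √(V t)) := by rw [← mul_assoc, hinv, one_mul]
    _ ≤ exp (-(a * t)) * (√(V 0 + 1) + γ / a * (exp (a * t) - 1)) := by gcongr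
    _ = √(V 0 + 1) * exp (-(a * t)) + γ / a - γ / a * exp (-(a * t)) := by
        rw [mul_add, mul_left_comm, mul_sub, hinv]; ring
    _ ≤ √(V 0 + 1) * exp (-(a * t)) + γ / a := by
        have : 0 ≤ γ / a * exp (-(a * t)) := by positivity
        linarith

end ScalarDecay

theorem limsup_le_of_eventually_le_of_tendsto {α : Type*} {l : Filter α} [l.NeBot]
    {f g : α → ℝ} {c : ℝ} (hf : ∀ t, 0 ≤ f t) (hfg : f ≤ᶠ[l] g) (hg : Tendsto g l (𝓝 c)) :
    limsup f l ≤ c :=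
  hg.limsup_eq ▸ limsup_le_limsup hfg (isCoboundedUnder_le_of_le l hf) hg.isBoundedUnder_le

theorem dotProduct_sub_smul_mulVec_le {ι : Type*} [Fintype ι] (L : Matrix ι ι ℝ) {e w : ι → ℝ}
    {β lam γ : ℝ} (hβ : 0 ≤ β) (hL : lam * (e ⬝ᵥ e) ≤ e ⬝ᵥ (L *ᵥ e)) (hw : √(w ⬝ᵥ w) ≤ γ) :
    e ⬝ᵥ (w - β • (L *ᵥ e)) ≤ γ * √(e ⬝ᵥ e) - β * lam * (e ⬝ᵥ e) := by
  have hcs : e ⬝ᵥ w ≤ γ * √(e ⬝ᵥ e) :=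
    (dotProduct_le_sqrt_mul_sqrt e w).trans (by rw [mul_comm]; gcongr)
  rw [dotProduct_sub, dotProduct_smul, smul_eq_mul]
  nlinarith [mul_le_mul_of_nonneg_left hL hβ]

section DynamicAverageConsensus

variable {ι : Type*} [Fintype ι] {L : Matrix ι ι ℝ} {β : ℝ}
  {x xhat : ℝ → ι → ℝ}

theorem dac_sum_eq (hsumL : ∀ u, ∑ i, (L *ᵥ u) i = 0) (hx : Differentiable ℝ x)
    (hinit : xhat 0 = x 0)
    (hode : ∀ t ≥ 0, HasDerivAt xhat (deriv x t - β • (L *ᵥ xhat t)) t) :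
    ∀ t ≥ 0, ∑ i, xhat t i = ∑ i, x t i := by
  have hderiv : ∀ t ≥ 0, HasDerivAt (fun s => ∑ i, xhat s i - ∑ i, x s i) 0 t := by
    intro t ht
    have hxhat := HasDerivAt.fun_sum (u := Finset.univ) fun i _ => hasDerivAt_pi.1 (hode t ht) i
    have hx' := HasDerivAt.fun_sum (u := Finset.univ) fun i _ =>
      hasDerivAt_pi.1 (hx t).hasDerivAt i
    refine (hxhat.sub hx').congr_deriv ?_
    simp [Finset.sum_sub_distrib, ← Finset.mul_sum, hsumL]
  intro t ht
  have := constant_of_has_deriv_right_zero (a := 0) (b := t)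
    (fun s hs => (hderiv s hs.1).continuousAt.continuousWithinAt)
    (fun s hs => (hderiv s hs.1).hasDerivWithinAt) t ⟨ht, le_rfl⟩
  simpa [hinit, sub_eq_zero] using this

theorem dac_hasDerivAt_centeringMatrix_mulVec [DecidableEq ι] (hL1 : L *ᵥ 1 = 0)
    (hsumL : ∀ u, ∑ i, (L *ᵥ u) i = 0)
    (hode : ∀ t ≥ 0, HasDerivAt xhat (deriv x t - β • (L *ᵥ xhat t)) t) :
    ∀ t ≥ 0, HasDerivAt (fun s => centeringMatrix ι *ᵥ xhat s)
      (centeringMatrix ι *ᵥ deriv x t - β • (L *ᵥ (centeringMatrix ι *ᵥ xhat t))) t := by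
  intro t ht
  refine ((hode t ht).matrix_mulVec _).congr_deriv ?_
  rw [mulVec_sub, mulVec_smul, centeringMatrix_mulVec_of_sum_eq_zero (hsumL _),
    mulVec_centeringMatrix_mulVec hL1]

theorem dac_limsup_le [DecidableEq ι] (hL1 : L *ᵥ 1 = 0) (hsumL : ∀ u, ∑ i, (L *ᵥ u) i = 0)
    {lam : ℝ} (hlam : 0 < lam) (hray : ∀ v, ∑ i, v i = 0 → lam * (v ⬝ᵥ v) ≤ v ⬝ᵥ (L *ᵥ v))
    (hβ : 0 < β) (hx : Differentiable ℝ x) {γ : ℝ}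
    (hγ : ∀ t ≥ 0, √((centeringMatrix ι *ᵥ deriv x t) ⬝ᵥ (centeringMatrix ι *ᵥ deriv x t)) ≤ γ)
    (hinit : xhat 0 = x 0)
    (hode : ∀ t ≥ 0, HasDerivAt xhat (deriv x t - β • (L *ᵥ xhat t)) t) (i : ι) :
    limsup (fun t => |xhat t i - (∑ j, x t j) / Fintype.card ι|) atTop ≤ γ / (β * lam) := by
  set e := fun t => centeringMatrix ι *ᵥ xhat t
  have hγ0 : 0 ≤ γ := (Real.sqrt_nonneg _).trans (hγ 0 le_rfl)
  have he := dac_hasDerivAt_centeringMatrix_mulVec hL1 hsumL hode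
  have hV : ∀ t ≥ 0, HasDerivAt (fun s => e s ⬝ᵥ e s)
      (2 * (e t ⬝ᵥ (centeringMatrix ι *ᵥ deriv x t - β • (L *ᵥ e t)))) t := fun t ht =>
    ((he t ht).dotProduct (he t ht)).congr_deriv (by rw [dotProduct_comm]; ring)
  have hdecay := sqrt_le_of_deriv_le_sqrt_sub (mul_pos hβ hlam) hγ0
    (fun t _ => dotProduct_self_nonneg (e t)) hV fun t ht => by
      linarith [dotProduct_sub_smul_mulVec_le L hβ.le
        (hray _ (sum_centeringMatrix_mulVec (xhat t))) (hγ t ht)]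
  have hlim : Tendsto (fun t => √(e 0 ⬝ᵥ e 0 + 1) * Real.exp (-(β * lam * t)) + γ / (β * lam))
      atTop (𝓝 (γ / (β * lam))) := by
    simpa using ((Real.tendsto_exp_neg_atTop_nhds_zero.comp
      (tendsto_id.const_mul_atTop (mul_pos hβ hlam))).const_mul _).add_const (γ / (β * lam))
  refine limsup_le_of_eventually_le_of_tendsto (fun t => abs_nonneg _) ?_ hlim
  filter_upwards [eventually_ge_atTop 0] with t ht
  rw [← dac_sum_eq hsumL hx hinit hode t ht, ← centeringMatrix_mulVec_apply]
  exact (abs_apply_le_sqrt_dotProduct_self (e t) i).trans (hdecay t ht)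

end DynamicAverageConsensus

/-- Lemma 1: ultimate bound of the conventional DAC algorithm
`xhat' = x' − β·L·xhat` with exact initialization `xhat(0) = x(0)` over a connected
graph: every local estimate converges to the `γ/(β·λ₂)`-neighborhood of the average. -/
theorem conventional_dac_ultimate_bound
    (N : ℕ) (hN : 2 ≤ N) (G : SimpleGraph (Fin N)) [DecidableRel G.Adj]
    (hconn : G.Connected)
    (L : Matrix (Fin N) (Fin N) ℝ) (hL : L = G.lapMatrix ℝ)
    (lam2 : ℝ)
    (hlam2 : lam2 = sInf {r : ℝ | ∃ v : Fin N → ℝ, v ≠ 0 ∧ (∑ i, v i) = 0 ∧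
        r = (v ⬝ᵥ (L *ᵥ v)) / (v ⬝ᵥ v)})
    (β : ℝ) (hβ : 0 < β)
    (x : ℝ → Fin N → ℝ) (hx : Differentiable ℝ x)
    (γ : ℝ)
    (hγ : IsLUB {r : ℝ | ∃ τ ≥ (0 : ℝ), r = Real.sqrt (∑ i,
        ((((1 : Matrix (Fin N) (Fin N) ℝ)
            - (N : ℝ)⁻¹ • Matrix.of (fun _ _ => (1 : ℝ))) *ᵥ deriv x τ) i) ^ 2)} γ)
    (xhat : ℝ → Fin N → ℝ)
    (hinit : xhat 0 = x 0)
    (hode : ∀ t ≥ (0 : ℝ), HasDerivAt xhat (deriv x t - β • (L *ᵥ xhat t)) t) :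
    ∀ i : Fin N,
      limsup (fun t : ℝ => |xhat t i - (∑ j, x t j) / N|) atTop ≤ γ / (β * lam2) := by
  subst hL
  have : Nontrivial (Fin N) := Fin.nontrivial_iff_two_le.2 hN
  change lam2 = sInf (rayleighQuotients (G.lapMatrix ℝ) (sumZeroSubmodule (Fin N))) at hlam2
  have hlam2_pos : 0 < lam2 := hlam2 ▸ sInf_rayleighQuotients_pos
    (fun v hv hv0 => hconn.dotProduct_lapMatrix_mulVec_pos hv0 hv) sumZeroSubmodule_ne_bot
  have hray : ∀ v : Fin N → ℝ, ∑ i, v i = 0 →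
      lam2 * (v ⬝ᵥ v) ≤ v ⬝ᵥ (G.lapMatrix ℝ *ᵥ v) := fun v hv =>
    hlam2 ▸ sInf_rayleighQuotients_mul_le (fun v _ => G.dotProduct_lapMatrix_mulVec_nonneg v) hv
  have hγ' : ∀ t ≥ 0, √((centeringMatrix (Fin N) *ᵥ deriv x t) ⬝ᵥ
      (centeringMatrix (Fin N) *ᵥ deriv x t)) ≤ γ := fun t ht => by
    simpa [centeringMatrix, dotProduct, sq] using hγ.1 ⟨t, ht, rfl⟩
  intro i
  simpa using dac_limsup_le G.lapMatrix_mulVec_const_eq_zero G.sum_lapMatrix_mulVec hlam2_pos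
    hray hβ hx hγ' hinit hode i
end

section
/- Let N ∈ ℕ, let L be a real N×N matrix, β ∈ ℝ, and let x : [0,∞) → ℝ^N be differentiable, m ∈ ℝ^N with 1ᵀm = 0, and let x̂ : [0,∞) → ℝ^N be differentiable with x̂'(t) = x'(t) − β·L·x̂(t) for all t ≥ 0 and x̂(0) = x(0) + m. Then for every s ∈ ℝ^N with 1ᵀs = 0, defining x'(t) = x(t) + s and m' = m − s: (a) 1ᵀm' = 0; (b) x'(t) + m' = x(t) + m for all t ≥ 0; (c) (1/N)·1ᵀ·x'(t) = (1/N)·1ᵀ·x(t) for all t ≥ 0; and (d) the same trajectory x̂ satisfies x̂'(t) = (x')'(t) − β·L·x̂(t) for all t ≥ 0 with x̂(0) = x'(0) + m'. Hence the alternative execution (x + s, m − s) produces exactly the same transmitted signals as (x, m). -/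
open Matrix

/-- observational-equivalence core of the eavesdropper privacy guarantee
(Theorem 2). For any zero-sum shift `s`, the alternative execution with references
`y(t) = x(t) + s` and mask `m − s` (a) still has a zero-sum mask, (b) produces the
same masked references, (c) has the same average reference, and (d) is compatible
with the very same estimate trajectory `xhat`. -/
theorem eavesdropper_observational_equivalence
    (N : ℕ) (L : Matrix (Fin N) (Fin N) ℝ) (β : ℝ)
    (x : ℝ → Fin N → ℝ) (hx : Differentiable ℝ x)
    (m : Fin N → ℝ) (hm : ∑ i, m i = 0)
    (xhat : ℝ → Fin N → ℝ)
    (hode : ∀ t ≥ (0 : ℝ), HasDerivAt xhat (deriv x t - β • (L *ᵥ xhat t)) t)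
    (hinit : xhat 0 = x 0 + m) :
    ∀ s : Fin N → ℝ, (∑ i, s i = 0) →
      (∑ i, (m - s) i = 0) ∧
      (∀ t ≥ (0 : ℝ), (x t + s) + (m - s) = x t + m) ∧
      (∀ t ≥ (0 : ℝ), (∑ i, (x t + s) i) / N = (∑ i, x t i) / N) ∧
      ((∀ t ≥ (0 : ℝ),
          HasDerivAt xhat (deriv (fun τ => x τ + s) t - β • (L *ᵥ xhat t)) t) ∧
        xhat 0 = (x 0 + s) + (m - s)) := by
  intro s hs
  refine ⟨by simp [Finset.sum_sub_distrib, hm, hs], fun t _ => by abel,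
    fun t _ => by simp [Finset.sum_add_distrib, hs], fun t ht => ?_, by rw [hinit]; abel⟩
  have hd : deriv (fun τ => x τ + s) t = deriv x t :=
    (((hx t).hasDerivAt).add_const s).deriv
  rw [hd]
  exact hode t ht
end

section
/- Let N ≥ 2, let L be a real N×N matrix, β ∈ ℝ, x : [0,∞) → ℝ^N differentiable, m ∈ ℝ^N with 1ᵀm = 0, and x̂ : [0,∞) → ℝ^N differentiable with x̂'(t) = x'(t) − β·L·x̂(t) for all t ≥ 0 and x̂(0) = x(0) + m. Then for every index i, every index j ≠ i, and every r ∈ ℝ, there exist a differentiable x̃ : [0,∞) → ℝ^N and m̃ ∈ ℝ^N with 1ᵀm̃ = 0 such that: x̃_i(t) = x_i(t) + r for all t ≥ 0; x̃(t) + m̃ = x(t) + m for all t ≥ 0; 1ᵀx̃(t) = 1ᵀx(t) for all t ≥ 0; and x̂ satisfies x̂'(t) = x̃'(t) − β·L·x̂(t) with x̂(0) = x̃(0) + m̃. Consequently, an external eavesdropper observing only L, β, and the trajectory x̂ cannot uniquely identify any agent's reference signal x_i(t). -/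
open Matrix

/-! Shifting every reference signal by a constant zero-sum vector `d` and the mask by `-d`
changes neither the masked references `x + m`, nor `x'`, nor the sum of the references, so
the observed estimate trajectory is still a run of the algorithm. Taking
`d = r • (eᵢ - eⱼ)` moves the `i`-th reference by `r`. -/

variable {ι : Type*} [Fintype ι]

def IsMaskedDACRun (L : Matrix ι ι ℝ) (β : ℝ) (x : ℝ → ι → ℝ) (m : ι → ℝ)
    (xhat : ℝ → ι → ℝ) : Prop :=
  (∀ t ≥ (0 : ℝ), HasDerivAt xhat (deriv x t - β • (L *ᵥ xhat t)) t) ∧ xhat 0 = x 0 + m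

theorem IsMaskedDACRun.shift {L : Matrix ι ι ℝ} {β : ℝ} {x : ℝ → ι → ℝ} {m : ι → ℝ}
    {xhat : ℝ → ι → ℝ} (h : IsMaskedDACRun L β x m xhat) (d : ι → ℝ) :
    IsMaskedDACRun L β (fun t => x t + d) (m - d) xhat :=
  ⟨fun t ht => by simpa only [deriv_add_const] using h.1 t ht,
    by rw [h.2, add_add_sub_cancel]⟩

theorem sum_pi_single_sub_pi_single [DecidableEq ι] (i j : ι) (r : ℝ) :
    ∑ k, (Pi.single i r - Pi.single j r : ι → ℝ) k = 0 := by
  simp [Finset.sum_sub_distrib]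

theorem eavesdropper_cannot_identify_reference_general
    (N : ℕ) (L : Matrix (Fin N) (Fin N) ℝ) (β : ℝ)
    (x : ℝ → Fin N → ℝ) (hx : Differentiable ℝ x)
    (m : Fin N → ℝ) (hm : ∑ k, m k = 0)
    (xhat : ℝ → Fin N → ℝ)
    (hode : ∀ t ≥ (0 : ℝ), HasDerivAt xhat (deriv x t - β • (L *ᵥ xhat t)) t)
    (hinit : xhat 0 = x 0 + m) :
    ∀ i j : Fin N, j ≠ i → ∀ r : ℝ,
      ∃ xt : ℝ → Fin N → ℝ, ∃ mt : Fin N → ℝ,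
        Differentiable ℝ xt ∧
        (∑ k, mt k = 0) ∧
        (∀ t ≥ (0 : ℝ), xt t i = x t i + r) ∧
        (∀ t ≥ (0 : ℝ), xt t + mt = x t + m) ∧
        (∀ t ≥ (0 : ℝ), ∑ k, xt t k = ∑ k, x t k) ∧
        (∀ t ≥ (0 : ℝ), HasDerivAt xhat (deriv xt t - β • (L *ᵥ xhat t)) t) ∧
        xhat 0 = xt 0 + mt := by
  intro i j hji r
  set d : Fin N → ℝ := Pi.single i r - Pi.single j r
  have hd : ∑ k, d k = 0 := sum_pi_single_sub_pi_single i j r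
  obtain ⟨hode', hinit'⟩ := IsMaskedDACRun.shift ⟨hode, hinit⟩ d
  refine ⟨fun t => x t + d, m - d, hx.add_const d, ?_, fun t _ => ?_,
    fun t _ => add_add_sub_cancel _ _ _, fun t _ => ?_, hode', hinit'⟩
  · simp [Finset.sum_sub_distrib, hm, hd]
  · simp [d, hji]
  · simp [Finset.sum_add_distrib, hd]

/-- Theorem 2: privacy against external eavesdroppers. For every agent
`i`, every other agent `j ≠ i` and every shift `r ∈ ℝ`, there is an alternative
execution `(x̃, m̃)` with zero-sum mask whose `i`-th reference differs from `x_i` by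
`r`, yet which produces exactly the same masked references, the same average, and is
compatible with the same observed estimate trajectory `xhat`; hence the eavesdropper
cannot uniquely identify `x_i(t)`. -/
theorem eavesdropper_cannot_identify_reference
    (N : ℕ) (hN : 2 ≤ N) (L : Matrix (Fin N) (Fin N) ℝ) (β : ℝ)
    (x : ℝ → Fin N → ℝ) (hx : Differentiable ℝ x)
    (m : Fin N → ℝ) (hm : ∑ k, m k = 0)
    (xhat : ℝ → Fin N → ℝ)
    (hode : ∀ t ≥ (0 : ℝ), HasDerivAt xhat (deriv x t - β • (L *ᵥ xhat t)) t)
    (hinit : xhat 0 = x 0 + m) :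
    ∀ i j : Fin N, j ≠ i → ∀ r : ℝ,
      ∃ xt : ℝ → Fin N → ℝ, ∃ mt : Fin N → ℝ,
        Differentiable ℝ xt ∧
        (∑ k, mt k = 0) ∧
        (∀ t ≥ (0 : ℝ), xt t i = x t i + r) ∧
        (∀ t ≥ (0 : ℝ), xt t + mt = x t + m) ∧
        (∀ t ≥ (0 : ℝ), ∑ k, xt t k = ∑ k, x t k) ∧
        (∀ t ≥ (0 : ℝ), HasDerivAt xhat (deriv xt t - β • (L *ᵥ xhat t)) t) ∧
        xhat 0 = xt 0 + mt :=
  eavesdropper_cannot_identify_reference_general N L β x hx m hm xhat hode hinit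
end

section
/- Let G be a simple undirected graph on vertex set V = {1,…,N}, L a real N×N matrix, β ∈ ℝ, and let H ⊆ V be a coalition of honest-but-curious agents. Fix a target agent i ∉ H and suppose i has a neighbor l ∈ N_i with l ∉ H (and l ≠ i). Let φ be a real N×N matrix supported on the edges of G, let m = (φᵀ − φ)·1, let x : [0,∞) → ℝ^N be differentiable, and let x̂ : [0,∞) → ℝ^N be differentiable with x̂'(t) = x'(t) − β·L·x̂(t) for all t ≥ 0 and x̂(0) = x(0) + m. Then for every r ∈ ℝ, letting x̃(t) = x(t) + r·e_i − r·e_l, φ' = φ + r·E_{il}, and m' = (φ'ᵀ − φ')·1, the following hold: (a) x̃(t) + m' = x(t) + m for all t ≥ 0; (b) x̃_h(t) = x_h(t) for every h ∈ H and all t ≥ 0; (c) φ'_{hj} = φ_{hj} and φ'_{jh} = φ_{jh} for every h ∈ H and every j (all offsets on edges incident to coalition members are unchanged); (d) x̂ satisfies x̂'(t) = x̃'(t) − β·L·x̂(t) with x̂(0) = x̃(0) + m'; and (e) x̃_i(t) = x_i(t) + r for all t ≥ 0. Consequently, the coalition H cannot uniquely identify the reference trajectory x_i(t) of the target agent i.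 -/
open Matrix

/-!
Shifting `r` from agent `i`'s reference to its neighbour `l`'s, and compensating on the single
offset `φ_{il}` (an edge incident to no coalition member), changes the mask by exactly
`r·e_l − r·e_i`. So the masked references `x + m`, which drive the estimate dynamics, are
unchanged, the shift is constant in time so `x'` is unchanged too, and the coalition observes the
same data for every `r`.
-/

section Mask

variable {n R : Type*} [Fintype n] [Ring R]

def offsetMask (φ : Matrix n n R) : n → R :=
  (φᵀ - φ) *ᵥ fun _ => 1

theorem offsetMask_add (φ ψ : Matrix n n R) :
    offsetMask (φ + ψ) = offsetMask φ + offsetMask ψ := by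
  simp only [offsetMask, transpose_add, add_sub_add_comm, add_mulVec]

variable [DecidableEq n]

theorem offsetMask_single (i l : n) (r : R) :
    offsetMask (single i l r) = Pi.single l r - Pi.single i r := by
  simp only [offsetMask, transpose_single, sub_mulVec, single_mulVec_eq, mul_one,
    ← Pi.single_smul', smul_eq_mul]

theorem offsetMask_add_single (φ : Matrix n n R) (i l : n) (r : R) :
    offsetMask (φ + single i l r) = offsetMask φ + Pi.single l r - Pi.single i r := by
  rw [offsetMask_add, offsetMask_single, add_sub_assoc]

end Mask

theorem honest_but_curious_cannot_identify_reference_general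
    (N : ℕ) (G : SimpleGraph (Fin N))
    (L : Matrix (Fin N) (Fin N) ℝ) (β : ℝ)
    (H : Set (Fin N)) (i l : Fin N)
    (hiH : i ∉ H) (hlH : l ∉ H) (hadj : G.Adj i l)
    (φ : Matrix (Fin N) (Fin N) ℝ)
    (m : Fin N → ℝ) (hm : m = (φ.transpose - φ) *ᵥ (fun _ => (1 : ℝ)))
    (x : ℝ → Fin N → ℝ)
    (xhat : ℝ → Fin N → ℝ)
    (hode : ∀ t ≥ (0 : ℝ), HasDerivAt xhat (deriv x t - β • (L *ᵥ xhat t)) t)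
    (hinit : xhat 0 = x 0 + m) :
    ∀ r : ℝ,
      ∀ xt : ℝ → Fin N → ℝ,
        xt = (fun t => x t + Pi.single i r - Pi.single l r) →
      ∀ φ' : Matrix (Fin N) (Fin N) ℝ,
        φ' = φ + Matrix.single i l r →
      ∀ m' : Fin N → ℝ,
        m' = (φ'.transpose - φ') *ᵥ (fun _ => (1 : ℝ)) →
      (∀ t ≥ (0 : ℝ), xt t + m' = x t + m) ∧
      (∀ h ∈ H, ∀ t ≥ (0 : ℝ), xt t h = x t h) ∧
      (∀ h ∈ H, ∀ j : Fin N, φ' h j = φ h j ∧ φ' j h = φ j h) ∧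
      ((∀ t ≥ (0 : ℝ), HasDerivAt xhat (deriv xt t - β • (L *ᵥ xhat t)) t) ∧
        xhat 0 = xt 0 + m') ∧
      (∀ t ≥ (0 : ℝ), xt t i = x t i + r) := by
  rintro r xt rfl φ' rfl m' rfl
  have hm' : offsetMask (φ + single i l r) = m + Pi.single l r - Pi.single i r := by
    rw [offsetMask_add_single, hm, offsetMask]
  have masked_eq (t : ℝ) : x t + Pi.single i r - Pi.single l r + offsetMask (φ + single i l r)
      = x t + m := by
    rw [hm']; abel
  have hi (h) (hh : h ∈ H) : h ≠ i := ne_of_mem_of_not_mem hh hiH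
  have hl (h) (hh : h ∈ H) : h ≠ l := ne_of_mem_of_not_mem hh hlH
  refine ⟨fun t _ => masked_eq t, fun h hh t _ => ?_, fun h hh j => ?_, ⟨fun t ht => ?_, ?_⟩,
    fun t _ => ?_⟩
  · simp [Pi.single_eq_of_ne (hi h hh), Pi.single_eq_of_ne (hl h hh)]
  · simp [single_apply_of_row_ne (hi h hh).symm, single_apply_of_col_ne _ _ (hl h hh).symm]
  · simpa only [add_sub_assoc, deriv_add_const] using hode t ht
  · exact hinit.trans (masked_eq 0).symm
  · simp [Pi.single_eq_of_ne hadj.ne]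

/-- Theorem 3: privacy against an honest-but-curious coalition `H`.
If the target agent `i ∉ H` has a non-colluding neighbor `l`, then for every `r ∈ ℝ`
the alternative execution with references `x̃ = x + r·e_i − r·e_l` and offsets
`φ' = φ + r·E_{il}` (mask `m' = (φ'ᵀ − φ')·1`) (a) yields the same masked
references, (b) leaves the references of all coalition members unchanged, (c) leaves
all offsets on edges incident to coalition members unchanged, (d) is compatible with
the same estimate trajectory `xhat`, and (e) shifts the target's reference by `r`;
hence the coalition cannot uniquely identify `x_i(t)`. -/
theorem honest_but_curious_cannot_identify_reference
    (N : ℕ) (G : SimpleGraph (Fin N)) [DecidableRel G.Adj]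
    (L : Matrix (Fin N) (Fin N) ℝ) (β : ℝ)
    (H : Set (Fin N)) (i l : Fin N)
    (hiH : i ∉ H) (hlH : l ∉ H) (hadj : G.Adj i l)
    (φ : Matrix (Fin N) (Fin N) ℝ)
    (hφ : ∀ a b, (¬ G.Adj a b ∨ a = b) → φ a b = 0)
    (m : Fin N → ℝ) (hm : m = (φ.transpose - φ) *ᵥ (fun _ => (1 : ℝ)))
    (x : ℝ → Fin N → ℝ) (hx : Differentiable ℝ x)
    (xhat : ℝ → Fin N → ℝ)
    (hode : ∀ t ≥ (0 : ℝ), HasDerivAt xhat (deriv x t - β • (L *ᵥ xhat t)) t)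
    (hinit : xhat 0 = x 0 + m) :
    ∀ r : ℝ,
      ∀ xt : ℝ → Fin N → ℝ,
        xt = (fun t => x t + Pi.single i r - Pi.single l r) →
      ∀ φ' : Matrix (Fin N) (Fin N) ℝ,
        φ' = φ + Matrix.single i l r →
      ∀ m' : Fin N → ℝ,
        m' = (φ'.transpose - φ') *ᵥ (fun _ => (1 : ℝ)) →
      (∀ t ≥ (0 : ℝ), xt t + m' = x t + m) ∧
      (∀ h ∈ H, ∀ t ≥ (0 : ℝ), xt t h = x t h) ∧
      (∀ h ∈ H, ∀ j : Fin N, φ' h j = φ h j ∧ φ' j h = φ j h) ∧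
      ((∀ t ≥ (0 : ℝ), HasDerivAt xhat (deriv xt t - β • (L *ᵥ xhat t)) t) ∧
        xhat 0 = xt 0 + m') ∧
      (∀ t ≥ (0 : ℝ), xt t i = x t i + r) :=
  honest_but_curious_cannot_identify_reference_general N G L β H i l hiH hlH hadj φ m hm x xhat hode
    hinit
end
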